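/- Let S be a unital ring, σ an injective endomorphism, δ a left σ-derivation, and f ∈ R = S[t;σ,δ] monic of degree m ≥ 2. The set R_m = {g ∈ R : deg(g) < m} together with termwise addition and the multiplication g ∘ h = (gh) mod_r f (remainder of right division by f) is a unital nonassociative ring S_f with multiplicative identity 1. -/

import Mathlib

/-!
Since `f` is monic of degree `m`, the coefficient of `q f` in degree `deg q + m` is the leading
coefficient of `q`, so no nonzero left multiple of `f` has degree `< m`. Remainders of right
division by `f` are therefore unique; hence `mod_r f` is additive and fixes every `g` with
`deg g < m`, which yields both distributive laws and that `1` is a two-sided identity.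
-/

/-- An abstract presentation of the skew polynomial ring `S[t;σ,δ]`:
a ring `R` together with an embedding of `S`, a variable `t` satisfying the
commutation rule `t·a = σ(a)·t + δ(a)`, such that the `t^i` form a basis of `R`
as a left `S`-module (encoded by the coefficient equivalence). -/
structure SkewPolyRing (S : Type*) (R : Type*) [Ring S] [Ring R]
    (σ : S →+* S) (δ : S →+ S) : Type _ where
  ι : S →+* R
  t : R
  t_comm : ∀ a : S, t * ι a = ι (σ a) * t + ι (δ a)
  coeff : R ≃+ (ℕ →₀ S)
  coeff_symm : ∀ p : ℕ →₀ S, coeff.symm p = p.sum fun i a => ι a * t ^ i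

namespace SkewPolyRing

variable {S R : Type*} [Ring S] [Ring R] {σ : S →+* S} {δ : S →+ S}

/-- `g` has degree `< m`. -/
def degLT (P : SkewPolyRing S R σ δ) (g : R) (m : ℕ) : Prop :=
  ∀ i, m ≤ i → P.coeff g i = 0

/-- The degree of a skew polynomial (with `deg 0 = 0` by convention). -/
noncomputable def deg (P : SkewPolyRing S R σ δ) (g : R) : ℕ :=
  (P.coeff g).support.sup id

/-- `f` is monic of degree `m`. -/
def MonicDeg (P : SkewPolyRing S R σ δ) (f : R) (m : ℕ) : Prop :=
  P.coeff f m = 1 ∧ ∀ i, m < i → P.coeff f i = 0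

/-- `modr` computes a remainder of right division by `f`. -/
def IsModr (P : SkewPolyRing S R σ δ) (f : R) (m : ℕ) (modr : R → R) : Prop :=
  ∀ g : R, P.degLT (modr g) m ∧ ∃ q : R, g = q * f + modr g

end SkewPolyRing

namespace SkewPolyRing

variable {S R : Type*} [Ring S] [Ring R] {σ : S →+* S} {δ : S →+ S}
  (P : SkewPolyRing S R σ δ)

/-- The additive group `R_m` of skew polynomials of degree `< m`. -/
def degreeLT (m : ℕ) : AddSubgroup R where
  carrier := {g | P.degLT g m}
  add_mem' {g h} hg hh i hi := by simp [hg i hi, hh i hi]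
  zero_mem' i _ := by simp
  neg_mem' {g} hg i hi := by simp [hg i hi]

lemma degLT_add {g h : R} {n : ℕ} (hg : P.degLT g n) (hh : P.degLT h n) :
    P.degLT (g + h) n :=
  (P.degreeLT n).add_mem hg hh

lemma degLT_sub {g h : R} {n : ℕ} (hg : P.degLT g n) (hh : P.degLT h n) :
    P.degLT (g - h) n :=
  (P.degreeLT n).sub_mem hg hh

lemma coeff_ι_mul_t_pow (i : ℕ) (b : S) :
    P.coeff (P.ι b * P.t ^ i) = Finsupp.single i b := by
  rw [← P.coeff.apply_symm_apply (Finsupp.single i b), P.coeff_symm,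
    Finsupp.sum_single_index (by simp)]

lemma coeff_ι_mul (a : S) (g : R) : P.coeff (P.ι a * g) = a • P.coeff g := by
  obtain ⟨p, rfl⟩ := P.coeff.symm.surjective g
  apply P.coeff.symm.injective
  rw [P.coeff.symm_apply_apply, P.coeff.apply_symm_apply, P.coeff_symm, P.coeff_symm,
    Finsupp.sum_smul_index (by simp), Finsupp.mul_sum]
  simp only [map_mul, mul_assoc]

lemma eq_sum_of_degLT {g : R} {n : ℕ} (hg : P.degLT g n) :
    g = ∑ i ∈ Finset.range n, P.ι (P.coeff g i) * P.t ^ i := by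
  conv_lhs => rw [← P.coeff.symm_apply_apply g, P.coeff_symm]
  refine Finsupp.sum_of_support_subset _ (fun i hi => ?_) _ (fun i _ => by simp)
  by_contra h
  exact Finsupp.mem_support_iff.mp hi (hg i (by simpa using h))

lemma degLT_mono {g : R} {m n : ℕ} (hg : P.degLT g m) (hmn : m ≤ n) : P.degLT g n :=
  fun i hi => hg i (hmn.trans hi)

lemma degLT_ι_mul_t_pow {i n : ℕ} (h : i < n) (b : S) : P.degLT (P.ι b * P.t ^ i) n := by
  intro k hk
  rw [coeff_ι_mul_t_pow, Finsupp.single_eq_of_ne (by omega)]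

lemma degLT_ι_mul {g : R} {n : ℕ} (a : S) (hg : P.degLT g n) : P.degLT (P.ι a * g) n := by
  intro i hi
  rw [coeff_ι_mul, Finsupp.smul_apply, hg i hi, smul_zero]

lemma degLT_t_mul {g : R} {n : ℕ} (hg : P.degLT g n) : P.degLT (P.t * g) (n + 1) := by
  rw [P.eq_sum_of_degLT hg, Finset.mul_sum]
  refine (P.degreeLT _).sum_mem fun i hi => ?_
  have hi : i < n := Finset.mem_range.mp hi
  rw [← mul_assoc, P.t_comm, add_mul, mul_assoc, ← pow_succ']
  exact P.degLT_add (P.degLT_ι_mul_t_pow (by omega) _) (P.degLT_ι_mul_t_pow (by omega) _)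

lemma degLT_t_pow_mul {g : R} {n : ℕ} (hg : P.degLT g n) (j : ℕ) :
    P.degLT (P.t ^ j * g) (j + n) := by
  induction j with
  | zero => simpa using hg
  | succ j ih => rw [pow_succ', mul_assoc, add_right_comm]; exact P.degLT_t_mul ih

lemma degLT_mul {g h : R} {a b : ℕ} (hg : P.degLT g a) (hh : P.degLT h (b + 1)) :
    P.degLT (g * h) (a + b) := by
  rw [P.eq_sum_of_degLT hg, Finset.sum_mul]
  refine (P.degreeLT _).sum_mem fun i hi => ?_
  have hi : i < a := Finset.mem_range.mp hi
  rw [mul_assoc]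
  exact P.degLT_ι_mul _ (P.degLT_mono (P.degLT_t_pow_mul hh i) (by omega))

lemma degLT_sub_ι_mul_t_pow {g : R} {n : ℕ} (hg : P.degLT g (n + 1)) :
    P.degLT (g - P.ι (P.coeff g n) * P.t ^ n) n := by
  intro i hi
  rw [map_sub, Finsupp.sub_apply, coeff_ι_mul_t_pow]
  rcases hi.eq_or_lt with rfl | hi
  · simp
  · rw [hg i hi, Finsupp.single_eq_of_ne (by omega), sub_zero]

lemma degLT_deg_succ (g : R) : P.degLT g (P.deg g + 1) := by
  intro i hi
  by_contra h
  have : i ≤ P.deg g := Finset.le_sup (f := id) (Finsupp.mem_support_iff.mpr h)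
  omega

lemma coeff_deg_ne_zero {g : R} (hg : g ≠ 0) : P.coeff g (P.deg g) ≠ 0 := by
  have hne : (P.coeff g).support.Nonempty :=
    Finsupp.support_nonempty_iff.mpr ((map_ne_zero_iff _ P.coeff.injective).mpr hg)
  obtain ⟨i, hi, hsup⟩ := Finset.exists_mem_eq_sup _ hne id
  rw [deg, hsup]
  exact Finsupp.mem_support_iff.mp hi

variable {P}

lemma MonicDeg.degLT_succ {f : R} {m : ℕ} (hf : P.MonicDeg f m) : P.degLT f (m + 1) :=
  fun i hi => hf.2 i hi

lemma MonicDeg.degLT_sub_t_pow {f : R} {m : ℕ} (hf : P.MonicDeg f m) :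
    P.degLT (f - P.t ^ m) m := by
  simpa [hf.1] using P.degLT_sub_ι_mul_t_pow hf.degLT_succ

lemma MonicDeg.coeff_mul {q f : R} {n m : ℕ} (hf : P.MonicDeg f m) (hq : P.degLT q (n + 1)) :
    P.coeff (q * f) (n + m) = P.coeff q n := by
  set c := P.coeff q n
  have hsplit : q * f = P.ι c * P.t ^ (n + m)
      + (P.ι c * (P.t ^ n * (f - P.t ^ m)) + (q - P.ι c * P.t ^ n) * f) := by
    rw [pow_add]; noncomm_ring
  have hlower : P.degLT (P.ι c * (P.t ^ n * (f - P.t ^ m)) + (q - P.ι c * P.t ^ n) * f) (n + m) :=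
    P.degLT_add (P.degLT_ι_mul c (P.degLT_t_pow_mul hf.degLT_sub_t_pow n))
      (P.degLT_mul (P.degLT_sub_ι_mul_t_pow hq) hf.degLT_succ)
  rw [hsplit, map_add P.coeff, Finsupp.add_apply, coeff_ι_mul_t_pow, Finsupp.single_eq_same,
    hlower _ le_rfl, add_zero]

lemma MonicDeg.eq_zero_of_degLT_mul {q f : R} {m : ℕ} (hf : P.MonicDeg f m)
    (h : P.degLT (q * f) m) : q = 0 := by
  by_contra hq
  apply P.coeff_deg_ne_zero hq
  rw [← hf.coeff_mul (P.degLT_deg_succ q)]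
  exact h _ (by omega)

lemma MonicDeg.eq_of_mul_add_eq_mul_add {f q₁ q₂ r₁ r₂ : R} {m : ℕ} (hf : P.MonicDeg f m)
    (h₁ : P.degLT r₁ m) (h₂ : P.degLT r₂ m) (h : q₁ * f + r₁ = q₂ * f + r₂) : r₁ = r₂ := by
  have hdiff : r₁ - r₂ = (q₂ - q₁) * f := by
    rw [sub_mul, sub_eq_sub_iff_add_eq_add, ← h, add_comm]
  have hq : q₂ - q₁ = 0 := hf.eq_zero_of_degLT_mul (hdiff ▸ P.degLT_sub h₁ h₂)
  rwa [hq, zero_mul, sub_eq_zero] at hdiff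

lemma IsModr.eq_self {f : R} {m : ℕ} {modr : R → R} (hmodr : P.IsModr f m modr)
    (hf : P.MonicDeg f m) {g : R} (hg : P.degLT g m) : modr g = g := by
  obtain ⟨hr, q, hq⟩ := hmodr g
  exact hf.eq_of_mul_add_eq_mul_add (q₁ := q) (q₂ := 0) hr hg (by rw [← hq, zero_mul, zero_add])

lemma IsModr.map_add {f : R} {m : ℕ} {modr : R → R} (hmodr : P.IsModr f m modr)
    (hf : P.MonicDeg f m) (a b : R) : modr (a + b) = modr a + modr b := by
  obtain ⟨hra, qa, hqa⟩ := hmodr a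
  obtain ⟨hrb, qb, hqb⟩ := hmodr b
  obtain ⟨hr, q, hq⟩ := hmodr (a + b)
  refine hf.eq_of_mul_add_eq_mul_add (q₁ := q) (q₂ := qa + qb) hr (P.degLT_add hra hrb) ?_
  rw [← hq, add_mul]
  conv_lhs => rw [hqa, hqb]
  abel

end SkewPolyRing

theorem petit_is_unital_nonassociative_ring_general {S R : Type*} [Ring S] [Ring R]
    (σ : S →+* S) (δ : S →+ S)
    (P : SkewPolyRing S R σ δ) (f : R) (m : ℕ) (hm : 2 ≤ m)
    (hf : P.MonicDeg f m) (modr : R → R) (hmodr : P.IsModr f m modr) :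
    (∀ g h k : R, P.degLT g m → P.degLT h m → P.degLT k m →
        modr ((g + h) * k) = modr (g * k) + modr (h * k)) ∧
    (∀ g h k : R, P.degLT g m → P.degLT h m → P.degLT k m →
        modr (k * (g + h)) = modr (k * g) + modr (k * h)) ∧
    (∀ g h : R, P.degLT g m → P.degLT h m → P.degLT (modr (g * h)) m) ∧
    P.degLT 1 m ∧
    (∀ g : R, P.degLT g m → modr (1 * g) = g ∧ modr (g * 1) = g) := by
  refine ⟨fun g h k _ _ _ => ?_, fun g h k _ _ _ => ?_, fun g h _ _ => (hmodr (g * h)).1, ?_,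
    fun g hg => ?_⟩
  · rw [add_mul, hmodr.map_add hf]
  · rw [mul_add, hmodr.map_add hf]
  · simpa using P.degLT_ι_mul_t_pow (i := 0) (by omega) 1
  · rw [one_mul, mul_one, hmodr.eq_self hf hg]
    exact ⟨rfl, rfl⟩

/-- Let `f ∈ R = S[t;σ,δ]` be monic of degree `m ≥ 2`. The set
`R_m = {g ∈ R : deg g < m}` together with termwise addition and the multiplication
`g ∘ h = (g·h) mod_r f` is a unital nonassociative ring `S_f` with identity `1`:
the multiplication is left and right distributive over addition on `R_m`,
`R_m` is closed under it, and `1` is a two-sided multiplicative identity. -/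
theorem petit_is_unital_nonassociative_ring {S R : Type*} [Ring S] [Ring R]
    (σ : S →+* S) (δ : S →+ S) (hσ : Function.Injective σ)
    (hδ : ∀ a b : S, δ (a * b) = σ a * δ b + δ a * b)
    (P : SkewPolyRing S R σ δ) (f : R) (m : ℕ) (hm : 2 ≤ m)
    (hf : P.MonicDeg f m) (modr : R → R) (hmodr : P.IsModr f m modr) :
    (∀ g h k : R, P.degLT g m → P.degLT h m → P.degLT k m →
        modr ((g + h) * k) = modr (g * k) + modr (h * k)) ∧
    (∀ g h k : R, P.degLT g m → P.degLT h m → P.degLT k m →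
        modr (k * (g + h)) = modr (k * g) + modr (k * h)) ∧
    (∀ g h : R, P.degLT g m → P.degLT h m → P.degLT (modr (g * h)) m) ∧
    P.degLT 1 m ∧
    (∀ g : R, P.degLT g m → modr (1 * g) = g ∧ modr (g * 1) = g) :=
  petit_is_unital_nonassociative_ring_general σ δ P f m hm hf modr hmodr
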